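/- arXiv:2004.11621 — 3 statements merged into one kernel-verified Lean document; each statement's English description precedes it below -/
import Mathlib

section
/- Let G be a graph on 6n vertices with a partition (A, B, C, D) as above (|A|=|B|=n, |C|=|D|=2n, no edges between A and D, no edges between B and C), let F ⊆ E(G) with |F| ≤ n, and suppose G/F is a clique. Then every vertex of A ∪ B is incident to at least one edge of F. -/
open SimpleGraph

/-- Contraction of a set of edges `F` in `G`: the vertices are the connected components of
the graph spanned by `F`, two components adjacent iff some pair of their vertices is
adjacent in `G`. -/
def contract {V : Type*} (G : SimpleGraph V) (F : Set (Sym2 V)) :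
    SimpleGraph (SimpleGraph.fromEdgeSet F).ConnectedComponent where
  Adj c d := c ≠ d ∧ ∃ u v : V, (SimpleGraph.fromEdgeSet F).connectedComponentMk u = c ∧
      (SimpleGraph.fromEdgeSet F).connectedComponentMk v = d ∧ G.Adj u v
  symm := ⟨by
    rintro c d ⟨hne, u, v, hu, hv, h⟩
    exact ⟨hne.symm, v, u, hv, hu, h.symm⟩⟩
  loopless := ⟨fun c h => h.1 rfl⟩

/-- `G/F` is a complete graph. -/
def IsCliqueGraph {V : Type*} (G : SimpleGraph V) : Prop :=
  ∀ u v : V, u ≠ v → G.Adj u v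

/-- A set of edges is a matching if no two distinct edges share an endpoint. -/
def IsMatchingSet {V : Type*} (M : Set (Sym2 V)) : Prop :=
  ∀ e ∈ M, ∀ f ∈ M, e ≠ f → ∀ v : V, v ∈ e → v ∉ f

/-!
If a vertex `v` of `A` met no edge of `F`, it would form a component of `G/F` on its own, so
every other component would have to contain a `G`-neighbour of `v`. No vertex of `D` is such a
neighbour, so each of the `2n` vertices of `D` lies in a nontrivial component and is covered
by `F`; so is the neighbour of `v` in any of these components. Then `F` covers at least
`2n + 1` vertices, which `n` edges cannot do. The same argument works for `B` and `C`.
-/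

lemma Sym2.ncard_setOf_mem_le {V : Type*} (e : Sym2 V) : {x | x ∈ e}.ncard ≤ 2 := by
  induction e using Sym2.ind with
  | h a b => simpa [Sym2.mem_iff, Set.ofPred_or] using Set.ncard_insert_le b {a}

lemma ncard_setOf_exists_mem_le {V : Type*} [Finite V] (F : Set (Sym2 V)) :
    {x | ∃ e ∈ F, x ∈ e}.ncard ≤ 2 * F.ncard := by
  have hF := F.toFinite
  calc {x | ∃ e ∈ F, x ∈ e}.ncard = (⋃ e ∈ hF.toFinset, {x | x ∈ e}).ncard := by
        congr 1; ext; simp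
    _ ≤ ∑ e ∈ hF.toFinset, {x | x ∈ e}.ncard := Finset.set_ncard_biUnion_le _ _
    _ ≤ ∑ _e ∈ hF.toFinset, 2 := Finset.sum_le_sum fun e _ => e.ncard_setOf_mem_le
    _ = 2 * F.ncard := by
        rw [Finset.sum_const, smul_eq_mul, Set.ncard_eq_toFinset_card F hF, mul_comm]

lemma exists_mem_of_reachable_of_ne {V : Type*} {F : Set (Sym2 V)} {u w : V}
    (h : (fromEdgeSet F).Reachable w u) (hne : w ≠ u) : ∃ e ∈ F, w ∈ e := by
  obtain ⟨p⟩ := h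
  cases p with
  | nil => exact absurd rfl hne
  | cons h _ => exact ⟨_, ((fromEdgeSet_adj _).1 h).1, Sym2.mem_mk_left _ _⟩

lemma exists_adj_reachable_of_isCliqueGraph {V : Type*} {G : SimpleGraph V}
    {F : Set (Sym2 V)} (hclique : IsCliqueGraph (contract G F)) {v w : V}
    (hv : ∀ e ∈ F, v ∉ e) (hw : w ≠ v) :
    ∃ u, G.Adj v u ∧ (fromEdgeSet F).Reachable w u := by
  have isolated : ∀ {u}, (fromEdgeSet F).Reachable v u → u = v := by
    intro u h
    by_contra hne
    obtain ⟨e, he, hve⟩ := exists_mem_of_reachable_of_ne h (Ne.symm hne)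
    exact hv e he hve
  have hne : (fromEdgeSet F).connectedComponentMk v ≠ (fromEdgeSet F).connectedComponentMk w :=
    fun h => hw (isolated (ConnectedComponent.eq.mp h))
  obtain ⟨-, v', u, hv', hu, hadj⟩ := hclique _ _ hne
  obtain rfl := isolated (ConnectedComponent.eq.mp hv').symm
  exact ⟨u, hadj, (ConnectedComponent.eq.mp hu).symm⟩

theorem exists_mem_of_isCliqueGraph {V : Type*} [Finite V] {G : SimpleGraph V}
    {F : Set (Sym2 V)} (hclique : IsCliqueGraph (contract G F)) {v : V} {X : Set V}
    (hX : X.Nonempty) (hFX : 2 * F.ncard ≤ X.ncard) (hvX : v ∉ X)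
    (hnadj : ∀ x ∈ X, ¬ G.Adj v x) : ∃ e ∈ F, v ∈ e := by
  by_contra! hv
  have covered : ∀ w u, (fromEdgeSet F).Reachable w u → w ≠ u →
      w ∈ {x | ∃ e ∈ F, x ∈ e} := fun _ _ => exists_mem_of_reachable_of_ne
  have hXcov : ∀ w ∈ X, ∃ u ∉ X, (fromEdgeSet F).Reachable w u ∧ w ≠ u := by
    intro w hw
    obtain ⟨u, hadj, hr⟩ :=
      exists_adj_reachable_of_isCliqueGraph hclique hv (ne_of_mem_of_not_mem hw hvX)
    have hu : u ∉ X := fun hu => hnadj u hu hadj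
    exact ⟨u, hu, hr, ne_of_mem_of_not_mem hw hu⟩
  obtain ⟨w₀, hw₀⟩ := hX
  obtain ⟨u₀, hu₀, hr₀, hne₀⟩ := hXcov w₀ hw₀
  have hsub : insert u₀ X ⊆ {x | ∃ e ∈ F, x ∈ e} := by
    refine Set.insert_subset (covered u₀ w₀ hr₀.symm hne₀.symm) fun w hw => ?_
    obtain ⟨u, -, hr, hne⟩ := hXcov w hw
    exact covered w u hr hne
  have hcard := Set.ncard_le_ncard hsub
  rw [Set.ncard_insert_of_notMem hu₀] at hcard
  have := ncard_setOf_exists_mem_le F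
  omega

theorem stmt_3_general {V : Type*} [Fintype V] (n : ℕ) (G : SimpleGraph V)
    (A B C D : Set V)
    (hAD : Disjoint A D)
    (hBC : Disjoint B C)
    (hA : A.ncard = n) (hB : B.ncard = n) (hC : C.ncard = 2 * n) (hD : D.ncard = 2 * n)
    (hADedge : ∀ a ∈ A, ∀ d ∈ D, ¬ G.Adj a d)
    (hBCedge : ∀ b ∈ B, ∀ c ∈ C, ¬ G.Adj b c)
    (F : Set (Sym2 V)) (hFcard : F.ncard ≤ n)
    (hclique : IsCliqueGraph (contract G F)) :
    ∀ v ∈ A ∪ B, ∃ e ∈ F, v ∈ e := by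
  intro v hv
  have hn : 0 < n := by
    rcases hv with hv | hv
    · exact hA ▸ (Set.ncard_pos).2 ⟨v, hv⟩
    · exact hB ▸ (Set.ncard_pos).2 ⟨v, hv⟩
  rcases hv with hvA | hvB
  · exact exists_mem_of_isCliqueGraph hclique (Set.nonempty_of_ncard_ne_zero (by omega))
      (by omega) (Set.disjoint_left.mp hAD hvA) (hADedge v hvA)
  · exact exists_mem_of_isCliqueGraph hclique (Set.nonempty_of_ncard_ne_zero (by omega))
      (by omega) (Set.disjoint_left.mp hBC hvB) (hBCedge v hvB)

theorem stmt_3 {V : Type*} [Fintype V] (n : ℕ) (G : SimpleGraph V)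
    (A B C D : Set V)
    (hunion : A ∪ B ∪ C ∪ D = Set.univ)
    (hAB : Disjoint A B) (hAC : Disjoint A C) (hAD : Disjoint A D)
    (hBC : Disjoint B C) (hBD : Disjoint B D) (hCD : Disjoint C D)
    (hV : Fintype.card V = 6 * n)
    (hA : A.ncard = n) (hB : B.ncard = n) (hC : C.ncard = 2 * n) (hD : D.ncard = 2 * n)
    (hADedge : ∀ a ∈ A, ∀ d ∈ D, ¬ G.Adj a d)
    (hBCedge : ∀ b ∈ B, ∀ c ∈ C, ¬ G.Adj b c)
    (F : Set (Sym2 V)) (hFE : F ⊆ G.edgeSet) (hFcard : F.ncard ≤ n)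
    (hclique : IsCliqueGraph (contract G F)) :
    ∀ v ∈ A ∪ B, ∃ e ∈ F, v ∈ e :=
  stmt_3_general n G A B C D hAD hBC hA hB hC hD hADedge hBCedge F hFcard hclique
end

section
/- Let G and H be graphs with |V(G)| = |V(H)|, with proper colorings c_G, c_H into the same color set, and lists ℓ : V(G) → 2^{V(H)} with c_G(u) = c_H(v) whenever v ∈ ℓ(u). Define L on V(Ḡ) ∪ V(H) with edges E(Ḡ) ∪ E(H) ∪ {{u,v} : u ∈ V(G), v ∈ ℓ(u)}, and set A = V(Ḡ), B = V(H). Then there exists a bijection φ : V(G) → V(H) with φ(u) ∈ ℓ(u) for all u and {φ(u), φ(v)} ∈ E(H) for every {u,v} ∈ E(G), if and only if there exists a perfect matching M of L in which every edge has one endpoint in A and one in B, such that L/M is a clique. -/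
open SimpleGraph

/-- The auxiliary relation defining the graph `L` on `V(Ḡ) ∪ V(H)`: the complement of `G`
lives on the left, `H` lives on the right, and a left vertex `u` is joined to a right
vertex `v` iff `v ∈ ℓ u`. -/
def lRel {α β : Type*} (G : SimpleGraph α) (H : SimpleGraph β) (ℓ : α → Set β) :
    (α ⊕ β) → (α ⊕ β) → Prop
  | Sum.inl u, Sum.inl v => ¬ G.Adj u v
  | Sum.inr u, Sum.inr v => H.Adj u v
  | Sum.inl u, Sum.inr v => v ∈ ℓ u
  | Sum.inr _, Sum.inl _ => False

section Matchings

variable {α β : Type*}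

lemma IsMatchingSet.eq_of_mem {V : Type*} {M : Set (Sym2 V)} (hM : IsMatchingSet M)
    {e f : Sym2 V} (he : e ∈ M) (hf : f ∈ M) {v : V} (hve : v ∈ e) (hvf : v ∈ f) : e = f := by
  by_contra hne
  exact hM e he f hf hne v hve hvf

def equivMatching (φ : α ≃ β) : Set (Sym2 (α ⊕ β)) :=
  Set.range fun a => s(Sum.inl a, Sum.inr (φ a))

def IsPerfectBipartiteMatching (M : Set (Sym2 (α ⊕ β))) : Prop :=
  IsMatchingSet M ∧ (∀ w : α ⊕ β, ∃ e ∈ M, w ∈ e) ∧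
    ∀ e ∈ M, ∃ (a : α) (b : β), e = s(Sum.inl a, Sum.inr b)

lemma isPerfectBipartiteMatching_equivMatching (φ : α ≃ β) :
    IsPerfectBipartiteMatching (equivMatching φ) := by
  refine ⟨?_, ?_, ?_⟩
  · rintro _ ⟨a, rfl⟩ _ ⟨a', rfl⟩ hne v hv hv'
    apply hne
    simp only [Sym2.mem_iff] at hv hv'
    rcases hv with rfl | rfl <;> rcases hv' with h | h <;> simp_all
  · rintro (a | b)
    · exact ⟨_, ⟨a, rfl⟩, Sym2.mem_mk_left _ _⟩
    · exact ⟨_, ⟨φ.symm b, rfl⟩, by simp⟩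
  · rintro _ ⟨a, rfl⟩
    exact ⟨a, φ a, rfl⟩

lemma IsPerfectBipartiteMatching.exists_equiv {M : Set (Sym2 (α ⊕ β))}
    (hM : IsPerfectBipartiteMatching M) : ∃ φ : α ≃ β, equivMatching φ = M := by
  obtain ⟨hmatch, hcover, hform⟩ := hM
  have partner : ∀ a : α, ∃ b : β, s(Sum.inl a, Sum.inr b) ∈ M := by
    intro a
    obtain ⟨e, he, hae⟩ := hcover (Sum.inl a)
    obtain ⟨a', b, rfl⟩ := hform e he
    simp only [Sym2.mem_iff, Sum.inl.injEq, reduceCtorEq, or_false] at hae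
    exact ⟨b, hae ▸ he⟩
  choose f hf using partner
  have partner_unique : ∀ a b, s(Sum.inl a, Sum.inr b) ∈ M → f a = b := fun a b hb => by
    simpa using hmatch.eq_of_mem (hf a) hb (Sym2.mem_mk_left _ _) (Sym2.mem_mk_left _ _)
  have hinj : Function.Injective f := fun a a' h => by
    have := hmatch.eq_of_mem (hf a) (hf a') (Sym2.mem_mk_right _ _) (h ▸ Sym2.mem_mk_right _ _)
    exact (by simpa using this : a = a' ∧ _).1
  have hsurj : Function.Surjective f := fun b => by
    obtain ⟨e, he, hbe⟩ := hcover (Sum.inr b)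
    obtain ⟨a, b', rfl⟩ := hform e he
    simp only [Sym2.mem_iff, Sum.inr.injEq, reduceCtorEq, false_or] at hbe
    exact ⟨a, partner_unique a b (hbe ▸ he)⟩
  refine ⟨Equiv.ofBijective f ⟨hinj, hsurj⟩, Set.ext fun e => ⟨?_, fun he => ?_⟩⟩
  · rintro ⟨a, rfl⟩
    exact hf a
  · obtain ⟨a, b, rfl⟩ := hform e he
    exact ⟨a, show s(_, Sum.inr (f a)) = _ by rw [partner_unique a b he]⟩

section Contraction

variable (φ : α ≃ β)

lemma equivMatching_reachable_iff {x y : α ⊕ β} :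
    (fromEdgeSet (equivMatching φ)).Reachable x y ↔
      Sum.elim id φ.symm x = Sum.elim id φ.symm y := by
  constructor
  · rintro ⟨p⟩
    induction p with
    | nil => rfl
    | cons h _ ih =>
      obtain ⟨⟨a, ha⟩, -⟩ := (fromEdgeSet_adj _).1 h
      rw [← ih]
      rcases Sym2.eq_iff.1 ha with ⟨rfl, rfl⟩ | ⟨rfl, rfl⟩ <;> simp
  · have reachable_inl : ∀ x, (fromEdgeSet (equivMatching φ)).Reachable
        (Sum.inl (Sum.elim id φ.symm x)) x := by
      rintro (a | b)
      · rfl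
      · exact Adj.reachable ((fromEdgeSet_adj _).2 ⟨⟨φ.symm b, by simp⟩, by simp⟩)
    intro h
    exact (reachable_inl x).symm.trans (h ▸ reachable_inl y)

lemma isCliqueGraph_contract_equivMatching_iff (L : SimpleGraph (α ⊕ β)) :
    IsCliqueGraph (contract L (equivMatching φ)) ↔
      ∀ a a' : α, a ≠ a' → ∃ x y : α ⊕ β,
        Sum.elim id φ.symm x = a ∧ Sum.elim id φ.symm y = a' ∧ L.Adj x y := by
  simp only [IsCliqueGraph, contract]
  constructor
  · intro h a a' hne
    obtain ⟨-, x, y, hx, hy, hxy⟩ := h (connectedComponentMk _ (Sum.inl a))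
      (connectedComponentMk _ (Sum.inl a')) (by
      rwa [Ne, ConnectedComponent.eq, equivMatching_reachable_iff])
    rw [ConnectedComponent.eq, equivMatching_reachable_iff] at hx hy
    exact ⟨x, y, hx, hy, hxy⟩
  · intro h c d hne
    induction c using ConnectedComponent.ind with | h x =>
    induction d using ConnectedComponent.ind with | h y =>
    rw [Ne, ConnectedComponent.eq, equivMatching_reachable_iff] at hne
    obtain ⟨x', y', hx', hy', hxy'⟩ := h _ _ hne
    refine ⟨by rwa [Ne, ConnectedComponent.eq, equivMatching_reachable_iff], x', y', ?_, ?_, hxy'⟩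
      <;> rwa [ConnectedComponent.eq, equivMatching_reachable_iff]

lemma elim_id_symm_eq_iff {x : α ⊕ β} {a : α} :
    Sum.elim id φ.symm x = a ↔ x = Sum.inl a ∨ x = Sum.inr (φ a) := by
  rcases x with a' | b <;> simp [Equiv.eq_symm_apply, eq_comm]

end Contraction

section ListGraph

variable {G : SimpleGraph α} {H : SimpleGraph β} {ℓ : α → Set β}

lemma equivMatching_subset_edgeSet_iff (φ : α ≃ β) :
    equivMatching φ ⊆ (fromRel (lRel G H ℓ)).edgeSet ↔ ∀ a, φ a ∈ ℓ a := by
  simp [equivMatching, Set.range_subset_iff, lRel]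

lemma isCliqueGraph_contract_lRel_iff {k : ℕ} {cG : α → Fin k} {cH : β → Fin k}
    (hcG : ∀ u v, G.Adj u v → cG u ≠ cG v) (hℓ : ∀ u : α, ∀ v ∈ ℓ u, cG u = cH v)
    {φ : α ≃ β} (hφ : ∀ a, φ a ∈ ℓ a) :
    IsCliqueGraph (contract (fromRel (lRel G H ℓ)) (equivMatching φ)) ↔
      ∀ u v : α, G.Adj u v → H.Adj (φ u) (φ v) := by
  have no_list_edge : ∀ u v, G.Adj u v → φ v ∉ ℓ u := fun u v huv hv =>
    hcG u v huv ((hℓ u _ hv).trans (hℓ v _ (hφ v)).symm)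
  rw [isCliqueGraph_contract_equivMatching_iff]
  constructor
  · intro h u v huv
    obtain ⟨x, y, hx, hy, hxy⟩ := h u v huv.ne
    rw [elim_id_symm_eq_iff] at hx hy
    rcases hx with rfl | rfl <;> rcases hy with rfl | rfl <;>
      simp only [fromRel_adj, lRel, or_false, false_or] at hxy
    · exact absurd huv (by tauto)
    · exact absurd hxy.2 (no_list_edge u v huv)
    · exact absurd hxy.2 (no_list_edge v u huv.symm)
    · exact hxy.2.elim id H.adj_symm
  · intro h u v hne
    by_cases huv : G.Adj u v
    · exact ⟨Sum.inr (φ u), Sum.inr (φ v), by simp, by simp, by simp [lRel, hne, h u v huv]⟩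
    · exact ⟨Sum.inl u, Sum.inl v, rfl, rfl, by simp [lRel, hne, huv]⟩

end ListGraph

end Matchings

theorem stmt_6_general {α β : Type*} (k : ℕ)
    (G : SimpleGraph α) (H : SimpleGraph β)
    (cG : α → Fin k) (cH : β → Fin k)
    (hcG : ∀ u v, G.Adj u v → cG u ≠ cG v)
    (ℓ : α → Set β) (hℓ : ∀ u : α, ∀ v ∈ ℓ u, cG u = cH v) :
    (∃ φ : α ≃ β, (∀ u : α, φ u ∈ ℓ u) ∧
        ∀ u v : α, G.Adj u v → H.Adj (φ u) (φ v)) ↔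
      (∃ M : Set (Sym2 (α ⊕ β)),
        M ⊆ (SimpleGraph.fromRel (lRel G H ℓ)).edgeSet ∧ IsMatchingSet M ∧
        (∀ w : α ⊕ β, ∃ e ∈ M, w ∈ e) ∧
        (∀ e ∈ M, ∃ (a : α) (b : β), e = s(Sum.inl a, Sum.inr b)) ∧
        IsCliqueGraph (contract (SimpleGraph.fromRel (lRel G H ℓ)) M)) := by
  constructor
  · rintro ⟨φ, hφℓ, hφG⟩
    obtain ⟨hmatch, hcover, hform⟩ := isPerfectBipartiteMatching_equivMatching φ
    exact ⟨equivMatching φ, (equivMatching_subset_edgeSet_iff φ).2 hφℓ, hmatch, hcover, hform,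
      (isCliqueGraph_contract_lRel_iff hcG hℓ hφℓ).2 hφG⟩
  · rintro ⟨M, hsub, hmatch, hcover, hform, hclique⟩
    obtain ⟨φ, rfl⟩ := IsPerfectBipartiteMatching.exists_equiv ⟨hmatch, hcover, hform⟩
    have hφℓ := (equivMatching_subset_edgeSet_iff φ).1 hsub
    exact ⟨φ, hφℓ, (isCliqueGraph_contract_lRel_iff hcG hℓ hφℓ).1 hclique⟩

theorem stmt_6 {α β : Type*} [Fintype α] [Fintype β] (k : ℕ)
    (G : SimpleGraph α) (H : SimpleGraph β)
    (hcard : Fintype.card α = Fintype.card β)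
    (cG : α → Fin k) (cH : β → Fin k)
    (hcG : ∀ u v, G.Adj u v → cG u ≠ cG v)
    (hcH : ∀ u v, H.Adj u v → cH u ≠ cH v)
    (ℓ : α → Set β) (hℓ : ∀ u : α, ∀ v ∈ ℓ u, cG u = cH v) :
    (∃ φ : α ≃ β, (∀ u : α, φ u ∈ ℓ u) ∧
        ∀ u v : α, G.Adj u v → H.Adj (φ u) (φ v)) ↔
      (∃ M : Set (Sym2 (α ⊕ β)),
        M ⊆ (SimpleGraph.fromRel (lRel G H ℓ)).edgeSet ∧ IsMatchingSet M ∧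
        (∀ w : α ⊕ β, ∃ e ∈ M, w ∈ e) ∧
        (∀ e ∈ M, ∃ (a : α) (b : β), e = s(Sum.inl a, Sum.inr b)) ∧
        IsCliqueGraph (contract (SimpleGraph.fromRel (lRel G H ℓ)) M)) :=
  stmt_6_general k G H cG cH hcG ℓ hℓ
end

section
/- Let G and H be graphs with proper colorings c_G and c_H into a common color set, and lists ℓ with c_G(u) = c_H(v) whenever v ∈ ℓ(u). Let L be the graph on V(Ḡ) ∪ V(H) with edges E(Ḡ) ∪ E(H) ∪ {{u,v} : u ∈ V(G), v ∈ ℓ(u)}, and let M be a perfect matching of L between A = V(Ḡ) and B = V(H) with L/M a clique. Then the bijection φ : V(G) → V(H) defined by φ(u) = the M-partner of u satisfies: for every edge {u,v} ∈ E(G), {φ(u), φ(v)} ∈ E(H). -/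
open SimpleGraph

/- A matched vertex `u` forms, together with its partner `φ u`, a whole component of the matching.
If `G.Adj u v`, the components of `u` and `v` are therefore distinct, so `L / M` being a clique
yields an `L`-edge between `{u, φ u}` and `{v, φ v}`. It cannot join `u` to `v`, since `L` carries
the complement of `G` there; nor `u` to `φ v` (or `v` to `φ u`), since lists preserve colours and
`u`, `v` have different colours. Hence it joins `φ u` to `φ v`, an edge of `H`. -/

theorem IsMatchingSet.mem_of_reachable {V : Type*} {M : Set (Sym2 V)} (hM : IsMatchingSet M)
    {e : Sym2 V} (he : e ∈ M) {x y : V} (hx : x ∈ e) (hxy : (fromEdgeSet M).Reachable x y) :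
    y ∈ e := by
  obtain ⟨p⟩ := hxy
  induction p with
  | nil => exact hx
  | @cons a b _ hadj _ ih =>
    rw [fromEdgeSet_adj] at hadj
    have he_eq : e = s(a, b) := by
      by_contra hne
      exact hM e he _ hadj.1 hne _ hx (Sym2.mem_mk_left _ _)
    exact ih (he_eq ▸ Sym2.mem_mk_right _ _)

section lRel

variable {α β : Type*} {G : SimpleGraph α} {H : SimpleGraph β} {ℓ : α → Set β}

theorem fromRel_lRel_adj_inl_inl {u v : α} :
    (fromRel (lRel G H ℓ)).Adj (Sum.inl u) (Sum.inl v) ↔ u ≠ v ∧ ¬ G.Adj u v := by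
  simp [lRel, G.adj_comm]

theorem fromRel_lRel_adj_inl_inr {u : α} {v : β} :
    (fromRel (lRel G H ℓ)).Adj (Sum.inl u) (Sum.inr v) ↔ v ∈ ℓ u := by
  simp [lRel]

theorem fromRel_lRel_adj_inr_inr {u v : β} :
    (fromRel (lRel G H ℓ)).Adj (Sum.inr u) (Sum.inr v) ↔ H.Adj u v := by
  simp only [fromRel_adj, ne_eq, Sum.inr.injEq, lRel, H.adj_comm v u, or_self]
  exact ⟨And.right, fun h => ⟨h.ne, h⟩⟩

theorem adj_of_fromRel_lRel_adj {γ : Type*} {cG : α → γ} {cH : β → γ}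
    (hcG : ∀ u v, G.Adj u v → cG u ≠ cG v) (hℓ : ∀ u : α, ∀ v ∈ ℓ u, cG u = cH v)
    {u v : α} {u' v' : β} (hu : u' ∈ ℓ u) (hv : v' ∈ ℓ v) (huv : G.Adj u v)
    {x y : α ⊕ β} (hx : x ∈ s(Sum.inl u, Sum.inr u')) (hy : y ∈ s(Sum.inl v, Sum.inr v'))
    (hxy : (fromRel (lRel G H ℓ)).Adj x y) : H.Adj u' v' := by
  rcases Sym2.mem_iff.1 hx with rfl | rfl <;> rcases Sym2.mem_iff.1 hy with rfl | rfl
  · exact absurd huv (fromRel_lRel_adj_inl_inl.1 hxy).2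
  · exact absurd ((hℓ u v' (fromRel_lRel_adj_inl_inr.1 hxy)).trans (hℓ v v' hv).symm)
      (hcG u v huv)
  · exact absurd ((hℓ u u' hu).trans (hℓ v u' (fromRel_lRel_adj_inl_inr.1 hxy.symm)).symm)
      (hcG u v huv)
  · exact fromRel_lRel_adj_inr_inr.1 hxy

end lRel

theorem stmt_16_general {α β : Type*} (k : ℕ) (G : SimpleGraph α) (H : SimpleGraph β)
    (cG : α → Fin k) (cH : β → Fin k)
    (hcG : ∀ u v, G.Adj u v → cG u ≠ cG v)
    (ℓ : α → Set β) (hℓ : ∀ u : α, ∀ v ∈ ℓ u, cG u = cH v)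
    (M : Set (Sym2 (α ⊕ β)))
    (hME : M ⊆ (SimpleGraph.fromRel (lRel G H ℓ)).edgeSet)
    (hmatch : IsMatchingSet M)
    (hclique : IsCliqueGraph (contract (SimpleGraph.fromRel (lRel G H ℓ)) M))
    (φ : α → β) (hφ : ∀ u : α, s(Sum.inl u, Sum.inr (φ u)) ∈ M) :
    ∀ u v : α, G.Adj u v → H.Adj (φ u) (φ v) := by
  intro u v huv
  have hpartner (a : α) : φ a ∈ ℓ a := fromRel_lRel_adj_inl_inr.1 (hME (hφ a))
  have hcomponent {a : α} {x : α ⊕ β}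
      (h : (fromEdgeSet M).connectedComponentMk x =
        (fromEdgeSet M).connectedComponentMk (Sum.inl a)) :
      x ∈ s(Sum.inl a, Sum.inr (φ a)) :=
    hmatch.mem_of_reachable (hφ a) (Sym2.mem_mk_left _ _) (ConnectedComponent.exact h.symm)
  have hne : (fromEdgeSet M).connectedComponentMk (Sum.inl u)
      ≠ (fromEdgeSet M).connectedComponentMk (Sum.inl v) := fun h =>
    huv.ne (by simpa using hcomponent h.symm : v = u).symm
  obtain ⟨-, x, y, hx, hy, hxy⟩ := hclique _ _ hne
  exact adj_of_fromRel_lRel_adj hcG hℓ (hpartner u) (hpartner v) huv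
    (hcomponent hx) (hcomponent hy) hxy

theorem stmt_16 {α β : Type*} (k : ℕ) (G : SimpleGraph α) (H : SimpleGraph β)
    (cG : α → Fin k) (cH : β → Fin k)
    (hcG : ∀ u v, G.Adj u v → cG u ≠ cG v)
    (hcH : ∀ u v, H.Adj u v → cH u ≠ cH v)
    (ℓ : α → Set β) (hℓ : ∀ u : α, ∀ v ∈ ℓ u, cG u = cH v)
    (M : Set (Sym2 (α ⊕ β)))
    (hME : M ⊆ (SimpleGraph.fromRel (lRel G H ℓ)).edgeSet)
    (hmatch : IsMatchingSet M)
    (hperfect : ∀ w : α ⊕ β, ∃ e ∈ M, w ∈ e)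
    (hcrossM : ∀ e ∈ M, ∃ (a : α) (b : β), e = s(Sum.inl a, Sum.inr b))
    (hclique : IsCliqueGraph (contract (SimpleGraph.fromRel (lRel G H ℓ)) M))
    (φ : α → β) (hφ : ∀ u : α, s(Sum.inl u, Sum.inr (φ u)) ∈ M) :
    ∀ u v : α, G.Adj u v → H.Adj (φ u) (φ v) :=
  stmt_16_general k G H cG cH hcG ℓ hℓ M hME hmatch hclique φ hφ
end
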